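/- arXiv:2103.06328 — 2 statements merged into one kernel-verified Lean document; each statement's English description precedes it below -/
import Mathlib

section
/- If (X, D(0), D(1)) is independent of Z, P(Z=0) > 0, and monotonicity holds (D(1) ≥ D(0) a.s.), then E[X | D = 1, Z = 0] = E[X | D(0) = D(1) = 1], provided P(D(0)=D(1)=1) > 0 and X is integrable. -/
/-!
On `{Z = 0}` the observed treatment is `D(0)`, and by monotonicity `D(0) = 1` forces `D(1) = 1`,
so `{D = 1, Z = 0}` is a.e. the event `{Z = 0} ∩ {W ∈ S}` where `W = (X, D(0), D(1))` and `S` is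
the always-taker event. Conditioning on `{Z = 0}` leaves the law of `W` unchanged because `W` is
independent of `Z`, and the conditional expectation of `X = fst ∘ W` given `{W ∈ S}` depends only
on the law of `W`.
-/

open MeasureTheory ProbabilityTheory

namespace ProbabilityTheory

variable {Ω α β : Type*} {mΩ : MeasurableSpace Ω} {mα : MeasurableSpace α}
  {mβ : MeasurableSpace β} {μ : Measure Ω}

lemma cond_congr_set {s t : Set Ω} (hst : s =ᵐ[μ] t) : μ[|s] = μ[|t] := by
  rw [cond, cond, measure_congr hst, Measure.restrict_congr_set hst]

lemma map_cond_preimage {W : Ω → α} (hW : Measurable W) {S : Set α} (hS : MeasurableSet S) :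
    (μ[|W ⁻¹' S]).map W = (μ.map W)[|S] := by
  rw [cond, cond, Measure.map_smul, ← Measure.restrict_map hW hS, Measure.map_apply hW hS]

lemma integral_comp_cond_preimage {E : Type*} [NormedAddCommGroup E] [NormedSpace ℝ E]
    {W : Ω → α} (hW : Measurable W) {S : Set α} (hS : MeasurableSet S) {g : α → E}
    (hg : StronglyMeasurable g) :
    ∫ ω, g (W ω) ∂μ[|W ⁻¹' S] = ∫ y, g y ∂(μ.map W)[|S] := by
  rw [← map_cond_preimage hW hS, integral_map hW.aemeasurable hg.aestronglyMeasurable]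

lemma IndepFun.map_cond_preimage_right [IsFiniteMeasure μ] {W : Ω → α} {Z : Ω → β}
    (h : IndepFun W Z μ) (hW : Measurable W) {T : Set β} (hT : MeasurableSet T)
    (hμT : μ (Z ⁻¹' T) ≠ 0) :
    (μ[|Z ⁻¹' T]).map W = μ.map W := by
  ext S hS
  rw [Measure.map_apply hW hS, Measure.map_apply hW hS, cond_apply' (hW hS), Set.inter_comm,
    indepFun_iff_measure_inter_preimage_eq_mul.mp h S T hS hT, mul_comm, mul_assoc,
    ENNReal.mul_inv_cancel hμT (measure_ne_top _ _), mul_one]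

lemma IndepFun.integral_comp_cond_inter_preimage [IsFiniteMeasure μ] {E : Type*}
    [NormedAddCommGroup E] [NormedSpace ℝ E] {W : Ω → α} {Z : Ω → β} (h : IndepFun W Z μ)
    (hW : Measurable W) (hZ : Measurable Z) {S : Set α} {T : Set β} (hS : MeasurableSet S)
    (hT : MeasurableSet T) (hμT : μ (Z ⁻¹' T) ≠ 0) {g : α → E} (hg : StronglyMeasurable g) :
    ∫ ω, g (W ω) ∂μ[|Z ⁻¹' T ∩ W ⁻¹' S] = ∫ ω, g (W ω) ∂μ[|W ⁻¹' S] := by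
  rw [← cond_cond_eq_cond_inter (hZ hT) (hW hS), integral_comp_cond_preimage hW hS hg,
    h.map_cond_preimage_right hW hT hμT, integral_comp_cond_preimage hW hS hg]

end ProbabilityTheory

lemma treated_unencouraged_ae_eq_alwaysTakers {Ω : Type*} [MeasurableSpace Ω] {μ : Measure Ω}
    {Z D0 D1 D : Ω → ℝ} (hD1bin : ∀ ω, D1 ω = 0 ∨ D1 ω = 1) (hmono : ∀ᵐ ω ∂μ, D0 ω ≤ D1 ω)
    (hD : ∀ ω, D ω = Z ω * D1 ω + (1 - Z ω) * D0 ω) :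
    {ω | D ω = 1 ∧ Z ω = 0} =ᵐ[μ] ({ω | Z ω = 0} ∩ {ω | D0 ω = 1 ∧ D1 ω = 1} : Set Ω) := by
  rw [Filter.eventuallyEq_set]
  filter_upwards [hmono] with ω hω
  have hDZ : Z ω = 0 → D ω = D0 ω := fun hZ ↦ by rw [hD, hZ]; ring
  constructor
  · rintro ⟨hD1, hZ⟩
    have hD0 : D0 ω = 1 := hDZ hZ ▸ hD1
    refine ⟨hZ, hD0, (hD1bin ω).resolve_left fun h ↦ ?_⟩
    linarith
  · rintro ⟨hZ, hD0, -⟩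
    exact ⟨(hDZ hZ).trans hD0, hZ⟩

theorem profiling_observable_always_takers_general
    {Ω : Type*} [MeasurableSpace Ω] (μ : Measure Ω) [IsProbabilityMeasure μ]
    (Z D0 D1 X : Ω → ℝ)
    (hZ : Measurable Z) (hD0 : Measurable D0) (hD1 : Measurable D1) (hX : Measurable X)
    (hD1bin : ∀ ω, D1 ω = 0 ∨ D1 ω = 1)
    (hindep : IndepFun (fun ω => (X ω, D0 ω, D1 ω)) Z μ)
    (hZ0pos : 0 < μ {ω | Z ω = 0})
    (hmono : ∀ᵐ ω ∂μ, D0 ω ≤ D1 ω)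
    (D : Ω → ℝ) (hD : ∀ ω, D ω = Z ω * D1 ω + (1 - Z ω) * D0 ω) :
    ∫ ω, X ω ∂(μ[|{ω | D ω = 1 ∧ Z ω = 0}]) =
      ∫ ω, X ω ∂(μ[|{ω | D0 ω = 1 ∧ D1 ω = 1}]) := by
  have hS : MeasurableSet {p : ℝ × ℝ × ℝ | p.2.1 = 1 ∧ p.2.2 = 1} :=
    (measurableSet_singleton 1).preimage (measurable_fst.comp measurable_snd) |>.inter
      ((measurableSet_singleton 1).preimage (measurable_snd.comp measurable_snd))
  rw [cond_congr_set (treated_unencouraged_ae_eq_alwaysTakers hD1bin hmono hD)]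
  exact hindep.integral_comp_cond_inter_preimage (hX.prodMk (hD0.prodMk hD1)) hZ hS
    (measurableSet_singleton 0) hZ0pos.ne' (g := Prod.fst) measurable_fst.stronglyMeasurable

/-- If (X, D(0), D(1)) is independent of Z, P(Z=0) > 0, and monotonicity holds (D(1) ≥ D(0) a.s.),
then E[X | D = 1, Z = 0] = E[X | D(0) = D(1) = 1], provided P(D(0)=D(1)=1) > 0 and X is
integrable. The observed treatment is `D ω = Z ω * D1 ω + (1 - Z ω) * D0 ω`. -/
theorem profiling_observable_always_takers
    {Ω : Type*} [MeasurableSpace Ω] (μ : Measure Ω) [IsProbabilityMeasure μ]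
    (Z D0 D1 X : Ω → ℝ)
    (hZ : Measurable Z) (hD0 : Measurable D0) (hD1 : Measurable D1) (hX : Measurable X)
    (hZbin : ∀ ω, Z ω = 0 ∨ Z ω = 1)
    (hD0bin : ∀ ω, D0 ω = 0 ∨ D0 ω = 1) (hD1bin : ∀ ω, D1 ω = 0 ∨ D1 ω = 1)
    (hindep : IndepFun (fun ω => (X ω, D0 ω, D1 ω)) Z μ)
    (hZ0pos : 0 < μ {ω | Z ω = 0})
    (hmono : ∀ᵐ ω ∂μ, D0 ω ≤ D1 ω)
    (hATpos : 0 < μ {ω | D0 ω = 1 ∧ D1 ω = 1})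
    (hXint : Integrable X μ)
    (D : Ω → ℝ) (hD : ∀ ω, D ω = Z ω * D1 ω + (1 - Z ω) * D0 ω) :
    ∫ ω, X ω ∂(μ[|{ω | D ω = 1 ∧ Z ω = 0}]) =
      ∫ ω, X ω ∂(μ[|{ω | D0 ω = 1 ∧ D1 ω = 1}]) :=
  profiling_observable_always_takers_general μ Z D0 D1 X hZ hD0 hD1 hX hD1bin hindep hZ0pos hmono D
    hD
end

section
/- Under independence of Z from (X, D(0), D(1)), monotonicity, 0 < P(Z=1) < 1, and P(D(1) > D(0)) > 0, the complier covariate mean satisfies: E[X | D(0) < D(1)] = (E[X] − E[X | D=0, Z=1]·P(D=0 | Z=1) − E[X | D=1, Z=0]·P(D=1 | Z=0)) / (E[D | Z=1] − E[D | Z=0]). -/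
/-!
Monotonicity splits `Ω`, up to a null set, into never-takers `{D(1) = 0}`, compliers and
always-takers `{D(0) = 1}`. Hence `E[X; complier] = E[X] - E[X; never-taker] - E[X; always-taker]`
and `P(complier) = E[D(1)] - E[D(0)]`. On `{Z = 1}` the event `{D = 0}` is the never-taker
event, which is independent of `Z`, so
`E[X | D = 0, Z = 1] P(D = 0 | Z = 1) = E[X; D = 0, Z = 1] / P(Z = 1) = E[X; never-taker]`;
symmetrically for always-takers on `{Z = 0}`, and `E[D | Z = z] = E[D(z)]`.
-/

open MeasureTheory ProbabilityTheory

section ConditionalIntegral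

variable {Ω : Type*} [MeasurableSpace Ω] {μ : Measure Ω} {s t : Set Ω}

lemma integral_cond (f : Ω → ℝ) : ∫ ω, f ω ∂μ[|s] = (μ.real s)⁻¹ * ∫ ω in s, f ω ∂μ := by
  rw [ProbabilityTheory.cond, integral_smul_measure, ENNReal.toReal_inv, smul_eq_mul,
    measureReal_def]

lemma integral_cond_inter_mul_cond_apply [IsFiniteMeasure μ] (hs : MeasurableSet s)
    (f : Ω → ℝ) :
    (∫ ω, f ω ∂μ[|t ∩ s]) * (μ[t|s]).toReal = (μ.real s)⁻¹ * ∫ ω in t ∩ s, f ω ∂μ := by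
  rw [integral_cond, cond_apply hs, ENNReal.toReal_mul, ENNReal.toReal_inv, ← measureReal_def,
    ← measureReal_def, Set.inter_comm s t]
  by_cases hts : μ.real (t ∩ s) = 0
  · rw [setIntegral_measure_zero f ((measureReal_eq_zero_iff).mp hts)]
    simp
  · field_simp

end ConditionalIntegral

namespace ProbabilityTheory

variable {Ω α β : Type*} [MeasurableSpace Ω] [MeasurableSpace α] [MeasurableSpace β]
  {μ : Measure Ω} {F : Ω → α} {G : Ω → β} {ψ : α → ℝ} {B : Set β}

lemma IndepFun.setIntegral_preimage (h : IndepFun F G μ) (hF : Measurable F) (hG : Measurable G)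
    (hψ : Measurable ψ) (hB : MeasurableSet B) :
    ∫ ω in G ⁻¹' B, ψ (F ω) ∂μ = μ.real (G ⁻¹' B) * ∫ ω, ψ (F ω) ∂μ := by
  calc ∫ ω in G ⁻¹' B, ψ (F ω) ∂μ = ∫ ω, ψ (F ω) * B.indicator 1 (G ω) ∂μ := by
        rw [← integral_indicator (hG hB)]
        congr 1 with ω
        by_cases hω : G ω ∈ B <;> simp [hω]
    _ = (∫ ω, ψ (F ω) ∂μ) * ∫ ω, B.indicator 1 (G ω) ∂μ :=
        h.integral_fun_comp_mul_comp hF.aemeasurable hG.aemeasurable hψ.aestronglyMeasurable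
          (measurable_one.indicator hB).aestronglyMeasurable
    _ = μ.real (G ⁻¹' B) * ∫ ω, ψ (F ω) ∂μ := by
        simp_rw [← Set.indicator_comp_right, Pi.one_comp]
        rw [integral_indicator_one (hG hB), mul_comm]

lemma IndepFun.setIntegral_inter_preimage (h : IndepFun F G μ) (hF : Measurable F)
    (hG : Measurable G) (hψ : Measurable ψ) {T : Set α} (hT : MeasurableSet T)
    (hB : MeasurableSet B) :
    ∫ ω in F ⁻¹' T ∩ G ⁻¹' B, ψ (F ω) ∂μ = μ.real (G ⁻¹' B) * ∫ ω in F ⁻¹' T, ψ (F ω) ∂μ := by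
  have := h.setIntegral_preimage hF hG (hψ.indicator hT) hB
  have hcomp (ω : Ω) : T.indicator ψ (F ω) = (F ⁻¹' T).indicator (fun ω => ψ (F ω)) ω := rfl
  simp only [hcomp] at this
  rwa [setIntegral_indicator (hF hT), integral_indicator (hF hT), Set.inter_comm] at this

lemma IndepFun.integral_cond_preimage [IsFiniteMeasure μ] (h : IndepFun F G μ) (hF : Measurable F)
    (hG : Measurable G) (hψ : Measurable ψ) (hB : MeasurableSet B) (hGB : μ (G ⁻¹' B) ≠ 0) :
    ∫ ω, ψ (F ω) ∂μ[|G ⁻¹' B] = ∫ ω, ψ (F ω) ∂μ := by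
  rw [integral_cond, h.setIntegral_preimage hF hG hψ hB,
    inv_mul_cancel_left₀ ((measureReal_ne_zero_iff).mpr hGB)]

lemma IndepFun.integral_cond_inter_mul_cond_eq_setIntegral [IsFiniteMeasure μ]
    (h : IndepFun F G μ) (hF : Measurable F) (hG : Measurable G) (hψ : Measurable ψ) {T : Set α}
    (hT : MeasurableSet T) (hB : MeasurableSet B) (hGB : μ (G ⁻¹' B) ≠ 0) {t : Set Ω}
    (ht : t ∩ G ⁻¹' B = F ⁻¹' T ∩ G ⁻¹' B) :
    (∫ ω, ψ (F ω) ∂μ[|t ∩ G ⁻¹' B]) * (μ[t | G ⁻¹' B]).toReal = ∫ ω in F ⁻¹' T, ψ (F ω) ∂μ := by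
  rw [integral_cond_inter_mul_cond_apply (hG hB), ht, h.setIntegral_inter_preimage hF hG hψ hT hB,
    inv_mul_cancel_left₀ ((measureReal_ne_zero_iff).mpr hGB)]

end ProbabilityTheory

section Compliers

variable {Ω : Type*} [MeasurableSpace Ω] {μ : Measure Ω} {D0 D1 : Ω → ℝ}

lemma binary_le_cases {d0 d1 : ℝ} (h0 : d0 = 0 ∨ d0 = 1) (h1 : d1 = 0 ∨ d1 = 1) (hle : d0 ≤ d1) :
    d0 = 0 ∧ d1 = 0 ∨ d0 = 0 ∧ d1 = 1 ∨ d0 = 1 ∧ d1 = 1 := by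
  grind

lemma integrable_of_forall_eq_zero_or_eq_one [IsFiniteMeasure μ] {g : Ω → ℝ} (hg : Measurable g)
    (hbin : ∀ ω, g ω = 0 ∨ g ω = 1) : Integrable g μ :=
  (integrable_const (1 : ℝ)).mono' hg.aestronglyMeasurable
    (ae_of_all _ fun ω => by rcases hbin ω with h | h <;> simp [h])

lemma integral_sub_eq_measureReal_compliers [IsFiniteMeasure μ] (hD0 : Measurable D0)
    (hD1 : Measurable D1) (hD0bin : ∀ ω, D0 ω = 0 ∨ D0 ω = 1) (hD1bin : ∀ ω, D1 ω = 0 ∨ D1 ω = 1)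
    (hmono : ∀ᵐ ω ∂μ, D0 ω ≤ D1 ω) :
    ∫ ω, D1 ω ∂μ - ∫ ω, D0 ω ∂μ = μ.real {ω | D0 ω < D1 ω} := by
  rw [← integral_sub (integrable_of_forall_eq_zero_or_eq_one hD1 hD1bin)
    (integrable_of_forall_eq_zero_or_eq_one hD0 hD0bin),
    ← integral_indicator_one (measurableSet_lt hD0 hD1)]
  refine integral_congr_ae ?_
  filter_upwards [hmono] with ω hω
  rcases binary_le_cases (hD0bin ω) (hD1bin ω) hω with ⟨h0, h1⟩ | ⟨h0, h1⟩ | ⟨h0, h1⟩ <;>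
    simp [h0, h1]

lemma setIntegral_compliers (hD0 : Measurable D0) (hD1 : Measurable D1)
    (hD0bin : ∀ ω, D0 ω = 0 ∨ D0 ω = 1) (hD1bin : ∀ ω, D1 ω = 0 ∨ D1 ω = 1)
    (hmono : ∀ᵐ ω ∂μ, D0 ω ≤ D1 ω) {f : Ω → ℝ} (hf : Integrable f μ) :
    ∫ ω in {ω | D0 ω < D1 ω}, f ω ∂μ
      = ∫ ω, f ω ∂μ - ∫ ω in {ω | D1 ω = 0}, f ω ∂μ - ∫ ω in {ω | D0 ω = 1}, f ω ∂μ := by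
  have hN : MeasurableSet {ω | D1 ω = 0} := hD1 (measurableSet_singleton 0)
  have hA : MeasurableSet {ω | D0 ω = 1} := hD0 (measurableSet_singleton 1)
  have hfN : Integrable (fun ω => f ω - {ω | D1 ω = 0}.indicator f ω) μ := hf.sub (hf.indicator hN)
  rw [← integral_indicator hN, ← integral_indicator hA,
    ← integral_indicator (measurableSet_lt hD0 hD1), ← integral_sub hf (hf.indicator hN),
    ← integral_sub hfN (hf.indicator hA)]
  refine integral_congr_ae ?_
  filter_upwards [hmono] with ω hω
  rcases binary_le_cases (hD0bin ω) (hD1bin ω) hω with ⟨h0, h1⟩ | ⟨h0, h1⟩ | ⟨h0, h1⟩ <;>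
    simp [h0, h1]

end Compliers

theorem complier_mean_identification_general
    {Ω : Type*} [MeasurableSpace Ω] (μ : Measure Ω) [IsProbabilityMeasure μ]
    (Z D0 D1 X : Ω → ℝ)
    (hZ : Measurable Z) (hD0 : Measurable D0) (hD1 : Measurable D1) (hX : Measurable X)
    (hZbin : ∀ ω, Z ω = 0 ∨ Z ω = 1)
    (hD0bin : ∀ ω, D0 ω = 0 ∨ D0 ω = 1) (hD1bin : ∀ ω, D1 ω = 0 ∨ D1 ω = 1)
    (hindep : IndepFun (fun ω => (X ω, D0 ω, D1 ω)) Z μ)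
    (hZ1pos : 0 < μ {ω | Z ω = 1}) (hZ1lt : μ {ω | Z ω = 1} < 1)
    (hmono : ∀ᵐ ω ∂μ, D0 ω ≤ D1 ω)
    (hXint : Integrable X μ)
    (D : Ω → ℝ) (hD : ∀ ω, D ω = Z ω * D1 ω + (1 - Z ω) * D0 ω) :
    ∫ ω, X ω ∂(μ[|{ω | D0 ω < D1 ω}]) =
      ((∫ ω, X ω ∂μ)
        - (∫ ω, X ω ∂(μ[|{ω | D ω = 0 ∧ Z ω = 1}]))
            * ((μ[|{ω | Z ω = 1}]) {ω | D ω = 0}).toReal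
        - (∫ ω, X ω ∂(μ[|{ω | D ω = 1 ∧ Z ω = 0}]))
            * ((μ[|{ω | Z ω = 0}]) {ω | D ω = 1}).toReal)
      / ((∫ ω, D ω ∂(μ[|{ω | Z ω = 1}])) - ∫ ω, D ω ∂(μ[|{ω | Z ω = 0}])) := by
  have hF : Measurable fun ω => (X ω, D0 ω, D1 ω) := by fun_prop
  have hZ1 : MeasurableSet {ω | Z ω = 1} := hZ (measurableSet_singleton 1)
  have hZ0 : MeasurableSet {ω | Z ω = 0} := hZ (measurableSet_singleton 0)
  have hZ0pos : μ {ω | Z ω = 0} ≠ 0 := by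
    have hcompl : {ω | Z ω = 0} = {ω | Z ω = 1}ᶜ := by ext ω; rcases hZbin ω with h | h <;> simp [h]
    rw [hcompl, prob_compl_eq_one_sub hZ1]
    exact (tsub_pos_of_lt hZ1lt).ne'
  have hD_of_Z1 (ω : Ω) (h : Z ω = 1) : D ω = D1 ω := by rw [hD ω, h]; ring
  have hD_of_Z0 (ω : Ω) (h : Z ω = 0) : D ω = D0 ω := by rw [hD ω, h]; ring
  have hNT : (∫ ω, X ω ∂μ[|{ω | D ω = 0 ∧ Z ω = 1}]) * (μ[{ω | D ω = 0} | {ω | Z ω = 1}]).toReal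
      = ∫ ω in {ω | D1 ω = 0}, X ω ∂μ :=
    hindep.integral_cond_inter_mul_cond_eq_setIntegral (ψ := Prod.fst) (t := {ω | D ω = 0})
      (T := {p | p.2.2 = 0}) (B := {1}) hF hZ measurable_fst
      (measurableSet_eq_fun (by fun_prop) measurable_const) (measurableSet_singleton 1) hZ1pos.ne'
      (Set.ext fun ω => and_congr_left fun hz => by simp [hD_of_Z1 ω hz])
  have hAT : (∫ ω, X ω ∂μ[|{ω | D ω = 1 ∧ Z ω = 0}]) * (μ[{ω | D ω = 1} | {ω | Z ω = 0}]).toReal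
      = ∫ ω in {ω | D0 ω = 1}, X ω ∂μ :=
    hindep.integral_cond_inter_mul_cond_eq_setIntegral (ψ := Prod.fst) (t := {ω | D ω = 1})
      (T := {p | p.2.1 = 1}) (B := {0}) hF hZ measurable_fst
      (measurableSet_eq_fun (by fun_prop) measurable_const) (measurableSet_singleton 0) hZ0pos
      (Set.ext fun ω => and_congr_left fun hz => by simp [hD_of_Z0 ω hz])
  have hED1 : ∫ ω, D ω ∂μ[|{ω | Z ω = 1}] = ∫ ω, D1 ω ∂μ := by
    rw [integral_congr_ae ((ae_cond_mem hZ1).mono hD_of_Z1)]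
    exact hindep.integral_cond_preimage (ψ := fun p => p.2.2) (B := {1}) hF hZ (by fun_prop)
      (measurableSet_singleton 1) hZ1pos.ne'
  have hED0 : ∫ ω, D ω ∂μ[|{ω | Z ω = 0}] = ∫ ω, D0 ω ∂μ := by
    rw [integral_congr_ae ((ae_cond_mem hZ0).mono hD_of_Z0)]
    exact hindep.integral_cond_preimage (ψ := fun p => p.2.1) (B := {0}) hF hZ (by fun_prop)
      (measurableSet_singleton 0) hZ0pos
  rw [integral_cond, hNT, hAT, hED1, hED0,
    ← setIntegral_compliers hD0 hD1 hD0bin hD1bin hmono hXint,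
    integral_sub_eq_measureReal_compliers hD0 hD1 hD0bin hD1bin hmono, inv_mul_eq_div]

/-- Under independence of Z from (X, D(0), D(1)), monotonicity, 0 < P(Z=1) < 1, and
P(D(1) > D(0)) > 0, the complier covariate mean satisfies
E[X | D(0) < D(1)] = (E[X] − E[X | D=0, Z=1]·P(D=0 | Z=1) − E[X | D=1, Z=0]·P(D=1 | Z=0))
/ (E[D | Z=1] − E[D | Z=0]). -/
theorem complier_mean_identification
    {Ω : Type*} [MeasurableSpace Ω] (μ : Measure Ω) [IsProbabilityMeasure μ]
    (Z D0 D1 X : Ω → ℝ)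
    (hZ : Measurable Z) (hD0 : Measurable D0) (hD1 : Measurable D1) (hX : Measurable X)
    (hZbin : ∀ ω, Z ω = 0 ∨ Z ω = 1)
    (hD0bin : ∀ ω, D0 ω = 0 ∨ D0 ω = 1) (hD1bin : ∀ ω, D1 ω = 0 ∨ D1 ω = 1)
    (hindep : IndepFun (fun ω => (X ω, D0 ω, D1 ω)) Z μ)
    (hZ1pos : 0 < μ {ω | Z ω = 1}) (hZ1lt : μ {ω | Z ω = 1} < 1)
    (hmono : ∀ᵐ ω ∂μ, D0 ω ≤ D1 ω)
    (hCOpos : 0 < μ {ω | D0 ω < D1 ω})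
    (hXint : Integrable X μ)
    (D : Ω → ℝ) (hD : ∀ ω, D ω = Z ω * D1 ω + (1 - Z ω) * D0 ω)
    (hATpos : 0 < μ {ω | D ω = 1 ∧ Z ω = 0})
    (hNTpos : 0 < μ {ω | D ω = 0 ∧ Z ω = 1}) :
    ∫ ω, X ω ∂(μ[|{ω | D0 ω < D1 ω}]) =
      ((∫ ω, X ω ∂μ)
        - (∫ ω, X ω ∂(μ[|{ω | D ω = 0 ∧ Z ω = 1}]))
            * ((μ[|{ω | Z ω = 1}]) {ω | D ω = 0}).toReal
        - (∫ ω, X ω ∂(μ[|{ω | D ω = 1 ∧ Z ω = 0}]))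
            * ((μ[|{ω | Z ω = 0}]) {ω | D ω = 1}).toReal)
      / ((∫ ω, D ω ∂(μ[|{ω | Z ω = 1}])) - ∫ ω, D ω ∂(μ[|{ω | Z ω = 0}])) :=
  complier_mean_identification_general μ Z D0 D1 X hZ hD0 hD1 hX hZbin hD0bin hD1bin hindep hZ1pos
    hZ1lt hmono hXint D hD
end
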